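/- arXiv:1407.1601 — 4 statements merged into one kernel-verified Lean document; each statement's English description precedes it below -/
import Mathlib

section
/- Pathwise optimality of earliest-deadline-first scheduling: for every x ∈ ℝ₊^N and s ∈ ℝ₊^N, the minimum of the firm usage Σ_{k=0}^{N−1} Σ_{j=1}^N v_k^j over all feasible schedules (u, v) for (x, s) equals Σ_{k=1}^N max{0, −ξ_k(x, s)}, and this minimum is attained (by the EDF schedule). -/
/-!
EDF serves the classes in deadline order out of the cumulative supply: on the supply axis,
class `j` occupies the interval `[U_{j-1}, U_j]` with `U_j = C_j - max{0, ξ_j}`, where `C_j` is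
the supply of periods `0, …, j-1`, and the part of that interval lying in period `k`'s supply
`[C_k, C_{k+1}]` is served in period `k`. The shortfall `max{0, -ξ_j}` is bought firm at the
deadline, and `Σ_{j ≤ m} max{0, -ξ_j} = Σ_{j ≤ m} x_j - C_m + max{0, ξ_m}`.

Conversely, any feasible schedule serves classes `1, …, m` within periods `0, …, m-1`, so its
firm usage `V` satisfies `Σ_{j ≤ m} x_j - C_m ≤ V` for all `m`. Taking `m` to be the last time
with `ξ_m ≤ 0` gives `Σ_{j ≤ N} max{0, -ξ_j} ≤ V`.
-/

/-- The residual process: `ξ_0 = 0`, `ξ_{k+1} = max{0, ξ_k} + s_k - x_{k+1}`. -/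
noncomputable def resid (x s : ℕ → ℝ) : ℕ → ℝ
  | 0 => 0
  | k + 1 => max 0 (resid x s k) + s k - x (k + 1)

/-- A feasible schedule for demand `x` (classes `j = 1,…,N`, class `j` must be exactly
served by its deadline `j`) and supply `s` (periods `k = 0,…,N-1`). -/
def FeasibleSchedule (N : ℕ) (x s : ℕ → ℝ) (u v : ℕ → ℕ → ℝ) : Prop :=
  (∀ k, k < N → ∀ j, 1 ≤ j → j ≤ N → 0 ≤ u k j ∧ 0 ≤ v k j) ∧
  (∀ k, k < N → ∀ j, 1 ≤ j → j ≤ N → j ≤ k → u k j = 0 ∧ v k j = 0) ∧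
  (∀ k, k < N → ∑ j ∈ Finset.Icc 1 N, u k j ≤ s k) ∧
  (∀ j, 1 ≤ j → j ≤ N → ∑ t ∈ Finset.range j, (u t j + v t j) = x j)

open Finset

noncomputable section

theorem sum_Icc_one_eq_sum_range {M : Type*} [AddCommMonoid M] (f : ℕ → M) (n : ℕ) :
    ∑ j ∈ Icc 1 n, f j = ∑ k ∈ range n, f (k + 1) := by
  rw [range_eq_Ico, sum_Ico_add', zero_add, Ico_add_one_right_eq_Icc]

def intervalOverlap (a b c d : ℝ) : ℝ := max 0 (min b d - max a c)

section intervalOverlap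

variable {a b c d : ℝ}

theorem intervalOverlap_nonneg : 0 ≤ intervalOverlap a b c d := le_max_left _ _

theorem intervalOverlap_comm : intervalOverlap a b c d = intervalOverlap c d a b := by
  rw [intervalOverlap, intervalOverlap, min_comm b d, max_comm a c]

theorem intervalOverlap_eq_zero_of_le (h : b ≤ c) : intervalOverlap a b c d = 0 :=
  max_eq_left (by linarith [min_le_left b d, le_max_right a c])

theorem intervalOverlap_eq_sub (hab : a ≤ b) (hcd : c ≤ d) :
    intervalOverlap a b c d = max a (min b d) - max a (min b c) := by
  simp only [intervalOverlap, max_def, min_def]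
  split_ifs <;> linarith

theorem sum_range_intervalOverlap (hab : a ≤ b) (f : ℕ → ℝ) (n : ℕ)
    (hf : ∀ t < n, f t ≤ f (t + 1)) :
    ∑ t ∈ range n, intervalOverlap a b (f t) (f (t + 1)) =
      max a (min b (f n)) - max a (min b (f 0)) := by
  rw [← sum_range_sub fun t => max a (min b (f t))]
  exact sum_congr rfl fun t ht => intervalOverlap_eq_sub hab (hf t (mem_range.1 ht))

theorem sum_range_intervalOverlap_le (hab : a ≤ b) (f : ℕ → ℝ) (n : ℕ)
    (hf : ∀ t < n, f t ≤ f (t + 1)) :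
    ∑ t ∈ range n, intervalOverlap a b (f t) (f (t + 1)) ≤ b - a := by
  rw [sum_range_intervalOverlap hab f n hf]
  linarith [max_le hab (min_le_left b (f n)), le_max_left a (min b (f 0))]

theorem sum_range_intervalOverlap_of_le (hab : a ≤ b) (f : ℕ → ℝ) (n : ℕ)
    (hf : ∀ t < n, f t ≤ f (t + 1)) (h0 : f 0 ≤ a) (hn : b ≤ f n) :
    ∑ t ∈ range n, intervalOverlap a b (f t) (f (t + 1)) = b - a := by
  rw [sum_range_intervalOverlap hab f n hf, min_eq_left hn, max_eq_right hab,
    min_eq_right (h0.trans hab), max_eq_left h0]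

end intervalOverlap

theorem resid_succ (x s : ℕ → ℝ) (k : ℕ) :
    resid x s (k + 1) = max 0 (resid x s k) + s k - x (k + 1) := rfl

def cumSupply (s : ℕ → ℝ) (k : ℕ) : ℝ := ∑ t ∈ range k, s t

theorem cumSupply_succ (s : ℕ → ℝ) (k : ℕ) : cumSupply s (k + 1) = cumSupply s k + s k :=
  sum_range_succ _ _

theorem FeasibleSchedule.sum_demand_le {N : ℕ} {x s : ℕ → ℝ} {u v : ℕ → ℕ → ℝ}
    (hf : FeasibleSchedule N x s u v) {m : ℕ} (hm : m ≤ N) :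
    ∑ j ∈ Icc 1 m, x j ≤ cumSupply s m + ∑ k ∈ range N, ∑ j ∈ Icc 1 N, v k j := by
  obtain ⟨hnonneg, -, hsupply, hdemand⟩ := hf
  have hu : ∀ t < N, ∀ j ∈ Icc 1 N, 0 ≤ u t j := fun t ht j hj =>
    (hnonneg t ht j (mem_Icc.1 hj).1 (mem_Icc.1 hj).2).1
  have hv : ∀ t < N, ∀ j ∈ Icc 1 N, 0 ≤ v t j := fun t ht j hj =>
    (hnonneg t ht j (mem_Icc.1 hj).1 (mem_Icc.1 hj).2).2
  have hIcc : Icc 1 m ⊆ Icc 1 N := Icc_subset_Icc_right hm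
  calc ∑ j ∈ Icc 1 m, x j
      = ∑ j ∈ Icc 1 m, ∑ t ∈ range j, (u t j + v t j) :=
        sum_congr rfl fun j hj => (hdemand j (mem_Icc.1 hj).1 ((mem_Icc.1 hj).2.trans hm)).symm
    _ ≤ ∑ j ∈ Icc 1 m, ∑ t ∈ range m, (u t j + v t j) := by
        refine sum_le_sum fun j hj => sum_le_sum_of_subset_of_nonneg
          (range_subset_range.2 (mem_Icc.1 hj).2) fun t ht _ => ?_
        have ht : t < N := by simp at ht; omega
        exact add_nonneg (hu t ht j (hIcc hj)) (hv t ht j (hIcc hj))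
    _ = ∑ t ∈ range m, (∑ j ∈ Icc 1 m, u t j + ∑ j ∈ Icc 1 m, v t j) := by
        rw [sum_comm]
        simp_rw [sum_add_distrib]
    _ ≤ ∑ t ∈ range m, (s t + ∑ j ∈ Icc 1 N, v t j) := by
        refine sum_le_sum fun t ht => ?_
        have ht : t < N := by simp at ht; omega
        gcongr
        · exact (sum_le_sum_of_subset_of_nonneg hIcc fun j hj _ => hu t ht j hj).trans
            (hsupply t ht)
        · exact fun j hj _ => hv t ht j hj
    _ ≤ cumSupply s m + ∑ k ∈ range N, ∑ j ∈ Icc 1 N, v k j := by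
        rw [sum_add_distrib, cumSupply]
        gcongr
        exact fun t ht _ => sum_nonneg (hv t (mem_range.1 ht))

namespace EDF

variable {N : ℕ} {x s : ℕ → ℝ}

/-- The amount EDF buys firm at deadline `k`. -/
def firm (x s : ℕ → ℝ) (k : ℕ) : ℝ := max 0 (-resid x s k)

def served (x s : ℕ → ℝ) (j : ℕ) : ℝ := cumSupply s j - max 0 (resid x s j)

theorem served_zero : served x s 0 = 0 := by simp [served, cumSupply, resid]

theorem served_le_cumSupply (j : ℕ) : served x s j ≤ cumSupply s j :=
  sub_le_self _ (le_max_left _ _)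

theorem served_succ (j : ℕ) :
    served x s (j + 1) = served x s j + (x (j + 1) - firm x s (j + 1)) := by
  have h := max_zero_sub_eq_self (resid x s (j + 1))
  rw [max_comm, max_comm (-_)] at h
  rw [served, served, firm, cumSupply_succ]
  linarith [resid_succ x s j]

theorem served_eq_sum (j : ℕ) : served x s j = ∑ i ∈ Icc 1 j, (x i - firm x s i) := by
  induction j with
  | zero => simp [served_zero]
  | succ j ih => rw [served_succ, ih, sum_Icc_succ_top (by omega)]

theorem firm_succ_le {k : ℕ} (hs : 0 ≤ s k) (hx : 0 ≤ x (k + 1)) : firm x s (k + 1) ≤ x (k + 1) :=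
  max_le hx (by rw [resid_succ]; linarith [le_max_left 0 (resid x s k)])

theorem served_le_served_succ {j : ℕ} (hs : 0 ≤ s j) (hx : 0 ≤ x (j + 1)) :
    served x s j ≤ served x s (j + 1) := by
  rw [served_succ]
  linarith [firm_succ_le hs hx]

theorem served_nonneg (hx : ∀ j, 1 ≤ j → j ≤ N → 0 ≤ x j) (hs : ∀ k < N, 0 ≤ s k) {j : ℕ}
    (hj : j ≤ N) : 0 ≤ served x s j := by
  rw [served_eq_sum]
  refine sum_nonneg fun i hi => ?_
  obtain ⟨hi1, hij⟩ := mem_Icc.1 hi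
  obtain ⟨k, rfl⟩ : ∃ k, i = k + 1 := ⟨i - 1, by omega⟩
  linarith [firm_succ_le (hs k (by omega)) (hx (k + 1) hi1 (by omega))]

/-- The EDF schedule: class `j` takes the supply in `[served (j-1), served j]`, and period `k`
provides `[cumSupply k, cumSupply (k+1)]`. -/
def u (x s : ℕ → ℝ) (k j : ℕ) : ℝ :=
  intervalOverlap (served x s (j - 1)) (served x s j) (cumSupply s k) (cumSupply s (k + 1))

def v (x s : ℕ → ℝ) (k j : ℕ) : ℝ := if k + 1 = j then firm x s j else 0

theorem u_eq_zero_of_le (hs : ∀ k < N, 0 ≤ s k) {k j : ℕ} (hk : k < N) (hjk : j ≤ k) :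
    u x s k j = 0 := by
  refine intervalOverlap_eq_zero_of_le ((served_le_cumSupply j).trans ?_)
  exact sum_le_sum_of_subset_of_nonneg (range_subset_range.2 hjk)
    fun t ht _ => hs t (by simp at ht; omega)

theorem sum_u_le (hx : ∀ j, 1 ≤ j → j ≤ N → 0 ≤ x j) (hs : ∀ k < N, 0 ≤ s k) {k : ℕ}
    (hk : k < N) : ∑ j ∈ Icc 1 N, u x s k j ≤ s k := by
  have hC : cumSupply s k ≤ cumSupply s (k + 1) := by
    linarith [cumSupply_succ s k, hs k hk]
  simp_rw [sum_Icc_one_eq_sum_range, u, Nat.add_sub_cancel, intervalOverlap_comm]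
  linarith [cumSupply_succ s k, sum_range_intervalOverlap_le hC (served x s) N
    fun t ht => served_le_served_succ (hs t ht) (hx (t + 1) (by omega) ht)]

theorem sum_range_u (hx : ∀ j, 1 ≤ j → j ≤ N → 0 ≤ x j) (hs : ∀ k < N, 0 ≤ s k) {j : ℕ}
    (hj : j < N) : ∑ t ∈ range (j + 1), u x s t (j + 1) = served x s (j + 1) - served x s j :=
  sum_range_intervalOverlap_of_le (served_le_served_succ (hs j hj) (hx _ (by omega) hj)) _ _
    (fun t ht => by linarith [cumSupply_succ s t, hs t (by omega)])
    (by simpa [cumSupply] using served_nonneg hx hs hj.le) (served_le_cumSupply _)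

theorem sum_range_v (j : ℕ) : ∑ t ∈ range (j + 1), v x s t (j + 1) = firm x s (j + 1) := by
  simp [v]

theorem sum_Icc_v {k : ℕ} (hk : k < N) : ∑ j ∈ Icc 1 N, v x s k j = firm x s (k + 1) := by
  simp only [v, sum_ite_eq, mem_Icc]
  exact if_pos ⟨by omega, hk⟩

theorem feasibleSchedule (hx : ∀ j, 1 ≤ j → j ≤ N → 0 ≤ x j) (hs : ∀ k < N, 0 ≤ s k) :
    FeasibleSchedule N x s (u x s) (v x s) := by
  refine ⟨fun k _ j _ _ => ⟨intervalOverlap_nonneg, ?_⟩,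
    fun k hk j _ _ hjk => ⟨u_eq_zero_of_le hs hk hjk, if_neg (by omega)⟩,
    fun k hk => sum_u_le hx hs hk, fun j hj1 hjN => ?_⟩
  · unfold v; split_ifs <;> simp [firm]
  · obtain ⟨i, rfl⟩ : ∃ i, j = i + 1 := ⟨j - 1, by omega⟩
    rw [sum_add_distrib, sum_range_u hx hs hjN, sum_range_v, served_succ]
    ring

theorem sum_firmUsage (x s : ℕ → ℝ) (N : ℕ) :
    ∑ k ∈ range N, ∑ j ∈ Icc 1 N, v x s k j = ∑ k ∈ Icc 1 N, firm x s k := by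
  rw [sum_Icc_one_eq_sum_range]
  exact sum_congr rfl fun k hk => sum_Icc_v (mem_range.1 hk)

theorem sum_firm_le {V : ℝ} {n : ℕ}
    (h : ∀ m ≤ n, ∑ j ∈ Icc 1 m, x j - cumSupply s m ≤ V) :
    ∑ k ∈ Icc 1 n, firm x s k ≤ V := by
  induction n with
  | zero => simpa [cumSupply] using h 0 le_rfl
  | succ n ih =>
    rcases le_or_gt 0 (resid x s (n + 1)) with hr | hr
    · rw [sum_Icc_succ_top (by omega), firm, max_eq_left (by linarith), add_zero]
      exact ih fun m hm => h m (by omega)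
    · have hserved : served x s (n + 1) = cumSupply s (n + 1) := by
        rw [served, max_eq_left hr.le, sub_zero]
      have hsum := served_eq_sum (x := x) (s := s) (n + 1)
      rw [sum_sub_distrib, hserved] at hsum
      linarith [h (n + 1) le_rfl]

end EDF

end

theorem edf_schedule_optimal_general
    (N : ℕ) (x s : ℕ → ℝ)
    (hx : ∀ j, 1 ≤ j → j ≤ N → 0 ≤ x j)
    (hs : ∀ k, k < N → 0 ≤ s k) :
    IsLeast
      {c : ℝ | ∃ u v : ℕ → ℕ → ℝ, FeasibleSchedule N x s u v ∧
        c = ∑ k ∈ Finset.range N, ∑ j ∈ Finset.Icc 1 N, v k j}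
      (∑ k ∈ Finset.Icc 1 N, max 0 (-(resid x s k))) := by
  refine ⟨⟨EDF.u x s, EDF.v x s, EDF.feasibleSchedule hx hs, (EDF.sum_firmUsage x s N).symm⟩, ?_⟩
  rintro c ⟨u, v, hf, rfl⟩
  exact EDF.sum_firm_le fun m hm => by linarith [hf.sum_demand_le hm]

/-- Pathwise optimality of earliest-deadline-first scheduling: for every
`x ∈ ℝ₊^N` and `s ∈ ℝ₊^N`, the minimum of the firm usage `Σ_{k=0}^{N-1} Σ_{j=1}^N v_k^j`
over all feasible schedules `(u, v)` for `(x, s)` equals `Σ_{k=1}^N max{0, -ξ_k(x, s)}`,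
and this minimum is attained (by the EDF schedule). -/
theorem edf_schedule_optimal
    (N : ℕ) (hN : 1 ≤ N) (x s : ℕ → ℝ)
    (hx : ∀ j, 1 ≤ j → j ≤ N → 0 ≤ x j)
    (hs : ∀ k, k < N → 0 ≤ s k) :
    IsLeast
      {c : ℝ | ∃ u v : ℕ → ℕ → ℝ, FeasibleSchedule N x s u v ∧
        c = ∑ k ∈ Finset.range N, ∑ j ∈ Finset.Icc 1 N, v k j}
      (∑ k ∈ Finset.Icc 1 N, max 0 (-(resid x s k))) :=
  edf_schedule_optimal_general N x s hx hs
end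

section
/- Convexity of the minimum expected cost of firm supply (Lemma 1, convexity part): suppose the law of the random supply vector s has compact support contained in ℝ₊^N. Then the function Q*(x) = c_0 · E[ Σ_{k=1}^N max{0, −ξ_k(x, s)} ] is well-defined (finite) and convex on ℝ₊^N. -/
open MeasureTheory

lemma resid_continuous (x : ℕ → ℝ) (k : ℕ) :
    Continuous (fun s : ℕ → ℝ => resid x s k) := by
  induction k with
  | zero => simpa [resid] using (continuous_const : Continuous fun _ : ℕ → ℝ => (0:ℝ))
  | succ k ih =>
    simp only [resid]
    exact ((continuous_const.max ih).add (continuous_apply k)).sub continuous_const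

lemma max0_neg (a : ℝ) : max 0 (-a) = max 0 a - a := by
  rcases le_total 0 a with h | h
  · rw [max_eq_left (neg_nonpos.mpr h), max_eq_right h]; ring
  · rw [max_eq_right (neg_nonneg.mpr h), max_eq_left h]; ring

lemma sum_deficit_eq (x s : ℕ → ℝ) (N : ℕ) :
    ∑ k ∈ Finset.Icc 1 N, max 0 (-(resid x s k)) =
      max 0 (resid x s N) + (∑ k ∈ Finset.Icc 1 N, x k) - ∑ k ∈ Finset.range N, s k := by
  induction N with
  | zero => simp [resid]
  | succ N ih =>
    rw [Finset.sum_Icc_succ_top (by omega : 1 ≤ N + 1), ih,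
      Finset.sum_Icc_succ_top (by omega : 1 ≤ N + 1), Finset.sum_range_succ, max0_neg]
    simp only [resid]
    ring

lemma resid_comb_le (x y s : ℕ → ℝ) {a b : ℝ} (ha : 0 ≤ a) (hb : 0 ≤ b)
    (hab : a + b = 1) (k : ℕ) :
    resid (a • x + b • y) s k ≤ a * resid x s k + b * resid y s k := by
  induction k with
  | zero => simp [resid]
  | succ k ih =>
    simp only [resid, Pi.add_apply, Pi.smul_apply, smul_eq_mul]
    have h1 : max 0 (resid (a • x + b • y) s k) ≤
        a * max 0 (resid x s k) + b * max 0 (resid y s k) := by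
      apply max_le
      · positivity
      · exact le_trans ih (add_le_add (mul_le_mul_of_nonneg_left (le_max_right _ _) ha)
          (mul_le_mul_of_nonneg_left (le_max_right _ _) hb))
    have hs : s k = a * s k + b * s k := by rw [← add_mul, hab, one_mul]
    nlinarith [h1, hs]

lemma max0_resid_comb_le (x y s : ℕ → ℝ) {a b : ℝ} (ha : 0 ≤ a) (hb : 0 ≤ b)
    (hab : a + b = 1) (k : ℕ) :
    max 0 (resid (a • x + b • y) s k) ≤
      a * max 0 (resid x s k) + b * max 0 (resid y s k) := by
  apply max_le
  · positivity
  · exact le_trans (resid_comb_le x y s ha hb hab k)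
      (add_le_add (mul_le_mul_of_nonneg_left (le_max_right _ _) ha)
        (mul_le_mul_of_nonneg_left (le_max_right _ _) hb))

lemma F_comb_le (x y s : ℕ → ℝ) {a b : ℝ} (ha : 0 ≤ a) (hb : 0 ≤ b)
    (hab : a + b = 1) (N : ℕ) :
    ∑ k ∈ Finset.Icc 1 N, max 0 (-(resid (a • x + b • y) s k)) ≤
      a * ∑ k ∈ Finset.Icc 1 N, max 0 (-(resid x s k)) +
      b * ∑ k ∈ Finset.Icc 1 N, max 0 (-(resid y s k)) := by
  rw [sum_deficit_eq, sum_deficit_eq, sum_deficit_eq]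
  have hmax := max0_resid_comb_le x y s ha hb hab N
  have hsum : ∑ k ∈ Finset.Icc 1 N, (a • x + b • y) k =
      a * ∑ k ∈ Finset.Icc 1 N, x k + b * ∑ k ∈ Finset.Icc 1 N, y k := by
    simp [Finset.sum_add_distrib, Finset.mul_sum]
  have hs : ∑ k ∈ Finset.range N, s k =
      a * ∑ k ∈ Finset.range N, s k + b * ∑ k ∈ Finset.range N, s k := by
    rw [← add_mul, hab, one_mul]
  nlinarith [hmax, hsum, hs]

/-- Convexity of the minimum expected cost of firm supply (Lemma 1,
convexity part): suppose the law of the random supply vector `s` has compact support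
contained in `ℝ₊^N`.  Then
`Q*(x) = c_0 · E[ Σ_{k=1}^N max{0, -ξ_k(x, s)} ]` is well-defined (the integrand is
integrable, hence the expectation is finite) and convex on the nonnegative orthant
`ℝ₊^N`. -/
theorem expected_firm_cost_convexOn
    (N : ℕ) (hN : 1 ≤ N)
    {Ω : Type*} [MeasurableSpace Ω] (P : Measure Ω) [IsProbabilityMeasure P]
    (s : Ω → ℕ → ℝ) (hmeas : Measurable s)
    (c0 : ℝ) (hc0 : 0 < c0)
    (K : Set (ℕ → ℝ)) (hK : IsCompact K)
    (hKpos : K ⊆ {y : ℕ → ℝ | ∀ j, j < N → 0 ≤ y j})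
    (hsupp : ∀ᵐ ω ∂P, s ω ∈ K) :
    (∀ x ∈ {x : ℕ → ℝ | ∀ j, 1 ≤ j → j ≤ N → 0 ≤ x j},
      Integrable (fun ω => ∑ k ∈ Finset.Icc 1 N, max 0 (-(resid x (s ω) k))) P) ∧
    ConvexOn ℝ {x : ℕ → ℝ | ∀ j, 1 ≤ j → j ≤ N → 0 ≤ x j}
      (fun x => c0 * ∫ ω, ∑ k ∈ Finset.Icc 1 N, max 0 (-(resid x (s ω) k)) ∂P) := by
  have hint : ∀ x : ℕ → ℝ,
      Integrable (fun ω => ∑ k ∈ Finset.Icc 1 N, max 0 (-(resid x (s ω) k))) P := by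
    intro x
    have hg : Continuous (fun y : ℕ → ℝ => ∑ k ∈ Finset.Icc 1 N, max 0 (-(resid x y k))) :=
      continuous_finset_sum _ fun k _ => continuous_const.max (resid_continuous x k).neg
    obtain ⟨C, hC⟩ := hK.exists_bound_of_continuousOn hg.continuousOn
    refine ⟨(hg.measurable.comp hmeas).aestronglyMeasurable, ?_⟩
    exact HasFiniteIntegral.of_bounded (C := C) (hsupp.mono fun ω hω => hC _ hω)
  refine ⟨fun x _ => hint x, ?_⟩
  have hconv : Convex ℝ {x : ℕ → ℝ | ∀ j, 1 ≤ j → j ≤ N → 0 ≤ x j} := by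
    intro x hx y hy a b ha hb hab
    intro j h1 h2
    have := hx j h1 h2
    have := hy j h1 h2
    simp only [Pi.add_apply, Pi.smul_apply, smul_eq_mul]
    positivity
  refine ⟨hconv, fun x hx y hy a b ha hb hab => ?_⟩
  have key : (∫ ω, ∑ k ∈ Finset.Icc 1 N, max 0 (-(resid (a • x + b • y) (s ω) k)) ∂P) ≤
      a * ∫ ω, ∑ k ∈ Finset.Icc 1 N, max 0 (-(resid x (s ω) k)) ∂P +
      b * ∫ ω, ∑ k ∈ Finset.Icc 1 N, max 0 (-(resid y (s ω) k)) ∂P := by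
    have hmono := integral_mono (hint (a • x + b • y))
      (((hint x).const_mul a).add ((hint y).const_mul b))
      (fun ω => F_comb_le x y (s ω) ha hb hab N)
    simp only [Pi.add_apply] at hmono
    rwa [integral_add ((hint x).const_mul a) ((hint y).const_mul b),
      integral_const_mul, integral_const_mul] at hmono
  have := mul_le_mul_of_nonneg_left key hc0.le
  simp only [smul_eq_mul]
  nlinarith [this]
end

section
/- Marginal cost supply curve (Theorem 2): suppose the law of the random supply vector s is absolutely continuous with respect to Lebesgue measure on ℝ^N, has compact support contained in ℝ₊^N. Then the function Q*(x) = c_0 · E[ Σ_{ℓ=1}^N max{0, −ξ_ℓ(x, s)} ] is differentiable at every x ∈ (0,∞)^N, with partial derivatives ∂Q*(x)/∂x_k = ζ_k(x) = c_0 [ P(ξ_k ≤ 0) + Σ_{t=k+1}^N P(ξ_k > 0, …, ξ_{t−1} > 0, ξ_t ≤ 0) ] for every k = 1,…,N. -/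
open MeasureTheory

/-- The demand vector `x ∈ ℝ^N` (coordinates `x_1, …, x_N`) associated with
`y ∈ Fin N → ℝ`: `x_j = y_{j-1}` for `1 ≤ j ≤ N` and `x_j = 0` otherwise. -/
def demandOf (N : ℕ) (y : Fin N → ℝ) : ℕ → ℝ := fun j =>
  if h : 1 ≤ j ∧ j ≤ N then y ⟨j - 1, by omega⟩ else 0

/-- The marginal cost price menu
`ζ_k(x) = c_0 [ P(ξ_k ≤ 0) + Σ_{t=k+1}^N P(ξ_k > 0, …, ξ_{t-1} > 0, ξ_t ≤ 0) ]`. -/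
noncomputable def zetaPrice (N : ℕ) {Ω : Type*} [MeasurableSpace Ω] (P : Measure Ω)
    (s : Ω → ℕ → ℝ) (c0 : ℝ) (x : ℕ → ℝ) (k : ℕ) : ℝ :=
  c0 * ((P {ω | resid x (s ω) k ≤ 0}).toReal +
    ∑ t ∈ Finset.Icc (k + 1) N,
      (P {ω | (∀ j, k ≤ j → j < t → 0 < resid x (s ω) j) ∧
        resid x (s ω) t ≤ 0}).toReal)

/-- The minimum expected cost of firm supply
`Q*(x) = c_0 · E[ Σ_{ℓ=1}^N max{0, -ξ_ℓ(x, s)} ]`, as a function of `y ∈ Fin N → ℝ`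
(the demand bundle `(x_1, …, x_N)`). -/
noncomputable def Qstar (N : ℕ) {Ω : Type*} [MeasurableSpace Ω] (P : Measure Ω)
    (s : Ω → ℕ → ℝ) (c0 : ℝ) (y : Fin N → ℝ) : ℝ :=
  c0 * ∫ ω, ∑ l ∈ Finset.Icc 1 N, max 0 (-(resid (demandOf N y) (s ω) l)) ∂P

/-!
Fix a supply path `w`. The residual `ξ_l` is piecewise affine in the demand: raising `x_k`
lowers `ξ_l` by the same amount exactly when `k ≤ l` and `ξ_k, …, ξ_{l-1} > 0`. Hence, wherever
no `ξ_l` vanishes, the shortfall `Σ_l max{0, -ξ_l}` has partial derivative in `x_k` equal to the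
number of `t ≥ k` with `ξ_k, …, ξ_{t-1} > 0 ≥ ξ_t`. Such ties are null events: `ξ_l = 0` puts
`s_{l-1}` on the graph of a function of `s_0, …, s_{l-2}`, a Lebesgue-null set. The shortfall is
Lipschitz in the demand with a deterministic constant and bounded on the compact support of `s`,
so the derivative passes under the expectation, and its expectation is `ζ_k / c_0`.
-/

open Finset

section

variable {E : Type*} [NormedAddCommGroup E] [NormedSpace ℝ E]
  {Ω : Type*} [MeasurableSpace Ω] {P : Measure Ω}

theorem LipschitzWith.finset_sum {α ι F : Type*} [PseudoEMetricSpace α]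
    [SeminormedAddCommGroup F] (s : Finset ι) {f : ι → α → F} {K : ι → NNReal}
    (hf : ∀ i ∈ s, LipschitzWith (K i) (f i)) :
    LipschitzWith (∑ i ∈ s, K i) fun a => ∑ i ∈ s, f i a := by
  classical
  induction s using Finset.induction_on with
  | empty => simpa using LipschitzWith.const (α := α) (0 : F)
  | insert i s hi ih =>
    simp only [sum_insert hi]
    exact (hf i (mem_insert_self i s)).add (ih fun j hj => hf j (mem_insert_of_mem hj))

theorem HasFDerivAt.max_zero_of_ne {f : E → ℝ} {f' : E →L[ℝ] ℝ} {y : E}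
    (hf : HasFDerivAt f f' y) (hy : f y ≠ 0) :
    HasFDerivAt (fun z => max 0 (f z)) (if 0 < f y then f' else 0) y := by
  rcases hy.lt_or_gt with hneg | hpos
  · rw [if_neg hneg.not_gt]
    refine (hasFDerivAt_const 0 y).congr_of_eventuallyEq ?_
    filter_upwards [hf.continuousAt.eventually_lt continuousAt_const hneg] with z hz
    exact max_eq_left hz.le
  · rw [if_pos hpos]
    refine hf.congr_of_eventuallyEq ?_
    filter_upwards [continuousAt_const.eventually_lt hf.continuousAt hpos] with z hz
    exact max_eq_right hz.le

theorem integrable_comp_of_ae_mem_compact [IsFiniteMeasure P] {X : Type*} [TopologicalSpace X]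
    [MeasurableSpace X] [OpensMeasurableSpace X] {f : X → ℝ} (hf : Continuous f) {s : Ω → X}
    (hs : Measurable s) {K : Set X} (hK : IsCompact K) (hsK : ∀ᵐ ω ∂P, s ω ∈ K) :
    Integrable (fun ω => f (s ω)) P := by
  obtain ⟨C, hC⟩ := hK.exists_bound_of_continuousOn hf.continuousOn
  exact .of_bound (hf.measurable.comp hs).aestronglyMeasurable C
    (hsK.mono fun ω hω => hC _ hω)

theorem volume_setOf_apply_eq_eq_zero {ι : Type*} [Fintype ι] [DecidableEq ι]
    {g : (ι → ℝ) → ℝ} (hg : Measurable g) (i : ι)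
    (hgi : ∀ v a, g (Function.update v i a) = g v) :
    volume {v : ι → ℝ | v i = g v} = 0 := by
  set S := {v : ι → ℝ | v i = g v}
  have hS : MeasurableSet S := measurableSet_eq_fun (measurable_pi_apply i) hg
  have hslice : ∀ v : ι → ℝ,
      ∫⁻ a, S.indicator (1 : (ι → ℝ) → ENNReal) (Function.update v i a) = 0 := by
    intro v
    have : (fun a => S.indicator (1 : (ι → ℝ) → ENNReal) (Function.update v i a)) =
        ({g v} : Set ℝ).indicator 1 := by
      ext a
      simp [S, Set.indicator_apply, hgi]
    rw [this, lintegral_indicator_one (measurableSet_singleton _), measure_singleton]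
  rw [← lintegral_indicator_one hS, volume_pi, lintegral_eq_lmarginal_univ 0,
    ← insert_erase (mem_univ i),
    lmarginal_insert' _ (measurable_one.indicator hS) (notMem_erase i _)]
  simp [hslice, lmarginal]

lemma resid_congr (x : ℕ → ℝ) {w w' : ℕ → ℝ} {l : ℕ} (h : ∀ j < l, w j = w' j) :
    resid x w l = resid x w' l := by
  induction l with
  | zero => rfl
  | succ k ih =>
    simp only [resid]
    rw [ih fun j hj => h j (by omega), h k (by omega)]

lemma continuous_resid (x : ℕ → ℝ) (l : ℕ) : Continuous fun w => resid x w l := by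
  induction l with
  | zero => exact continuous_const
  | succ k ih => exact ((continuous_const.max ih).add (continuous_apply k)).sub continuous_const

lemma lipschitzWith_resid {α : Type*} [PseudoEMetricSpace α] {x : α → ℕ → ℝ} {L : NNReal}
    (hx : ∀ k, LipschitzWith L fun z => x z k) (w : ℕ → ℝ) (l : ℕ) :
    LipschitzWith (l * L) fun z => resid (x z) w l := by
  induction l with
  | zero => exact LipschitzWith.const' (0 : ℝ)
  | succ k ih =>
    have := ((ih.const_max 0).add (LipschitzWith.const (w k))).sub (hx (k + 1))
    exact this.weaken (le_of_eq (by push_cast; ring))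

lemma sum_Icc_succ_ite_forall_pos {M : Type*} [AddCommMonoid M] (ξ : ℕ → ℝ) (v : ℕ → M)
    (l : ℕ) :
    (∑ k ∈ Icc 1 (l + 1), if ∀ j, k ≤ j → j < l + 1 → 0 < ξ j then v k else 0) =
      (if 0 < ξ l then ∑ k ∈ Icc 1 l, if ∀ j, k ≤ j → j < l → 0 < ξ j then v k else 0
        else 0) + v (l + 1) := by
  rw [sum_Icc_succ_top (by omega), if_pos (fun j h₁ h₂ => by omega)]
  congr 1
  split_ifs with hl
  · refine sum_congr rfl fun k hk => if_congr ?_ rfl rfl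
    refine ⟨fun h j h₁ h₂ => h j h₁ (by omega), fun h j h₁ h₂ => ?_⟩
    rcases Nat.lt_or_ge j l with hj | hj
    · exact h j h₁ hj
    · rwa [show j = l by omega]
  · refine sum_eq_zero fun k hk => if_neg fun h => hl (h l (mem_Icc.1 hk).2 (by omega))

lemma hasFDerivAt_resid {x : E → ℕ → ℝ} {x' : ℕ → E →L[ℝ] ℝ} {y : E}
    (hx : ∀ k, HasFDerivAt (fun z => x z k) (x' k) y) (w : ℕ → ℝ) {l : ℕ}
    (hne : ∀ j ∈ Ico 1 l, resid (x y) w j ≠ 0) :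
    HasFDerivAt (fun z => resid (x z) w l)
      (-∑ k ∈ Icc 1 l, if ∀ j, k ≤ j → j < l → 0 < resid (x y) w j then x' k else 0) y := by
  induction l with
  | zero => exact (hasFDerivAt_const (0 : ℝ) y).congr_fderiv (by simp)
  | succ l ih =>
    have hmax : HasFDerivAt (fun z => max 0 (resid (x z) w l))
        (if 0 < resid (x y) w l then
          -∑ k ∈ Icc 1 l, if ∀ j, k ≤ j → j < l → 0 < resid (x y) w j then x' k else 0
          else 0) y := by
      rcases Nat.eq_zero_or_pos l with rfl | hl
      · simpa [resid] using hasFDerivAt_const (max 0 0 : ℝ) y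
      · exact (ih fun j hj => hne j (by simp at hj ⊢; omega)).max_zero_of_ne
          (hne l (by simp; omega))
    refine ((hmax.add_const (w l)).sub (hx (l + 1))).congr_fderiv ?_
    rw [sum_Icc_succ_ite_forall_pos, neg_add, sub_eq_add_neg, apply_ite Neg.neg, neg_zero]

noncomputable def shortfall (N : ℕ) (x w : ℕ → ℝ) : ℝ :=
  ∑ l ∈ Icc 1 N, max 0 (-resid x w l)

noncomputable def pathMarginal (N : ℕ) (ξ : ℕ → ℝ) (k : ℕ) : ℝ :=
  ∑ t ∈ Icc k N, if (∀ j, k ≤ j → j < t → 0 < ξ j) ∧ ξ t ≤ 0 then 1 else 0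

lemma hasFDerivAt_shortfall {N : ℕ} {x : E → ℕ → ℝ} {x' : ℕ → E →L[ℝ] ℝ} {y : E}
    (hx : ∀ k, HasFDerivAt (fun z => x z k) (x' k) y) (w : ℕ → ℝ)
    (hne : ∀ l ∈ Icc 1 N, resid (x y) w l ≠ 0) :
    HasFDerivAt (fun z => shortfall N (x z) w)
      (∑ k ∈ Icc 1 N, pathMarginal N (resid (x y) w) k • x' k) y := by
  have hterm : ∀ l ∈ Icc 1 N, HasFDerivAt (fun z => max 0 (-resid (x z) w l))
      (∑ k ∈ Icc 1 l, if (∀ j, k ≤ j → j < l → 0 < resid (x y) w j) ∧ resid (x y) w l ≤ 0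
        then x' k else 0) y := by
    intro l hl
    have hξl := hne l hl
    refine ((hasFDerivAt_resid hx w fun j hj => hne j (by simp at hj hl ⊢; omega)).neg
      |>.max_zero_of_ne (neg_ne_zero.2 hξl)).congr_fderiv ?_
    rw [neg_neg]
    rcases hξl.lt_or_gt with hneg | hpos
    · simp [hneg, hneg.le]
    · simp [hpos.not_gt, hpos.not_ge]
  refine (HasFDerivAt.fun_sum hterm).congr_fderiv ?_
  rw [sum_comm' (t' := Icc 1 N) (s' := fun k => Icc k N) (fun l k => by simp; omega)]
  refine sum_congr rfl fun k _ => ?_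
  simp only [pathMarginal, sum_smul, ite_smul, one_smul, zero_smul]

lemma lipschitzWith_shortfall {α : Type*} [PseudoEMetricSpace α] (N : ℕ) {x : α → ℕ → ℝ}
    {L : NNReal} (hx : ∀ k, LipschitzWith L fun z => x z k) (w : ℕ → ℝ) :
    LipschitzWith (∑ l ∈ Icc 1 N, l * L) fun z => shortfall N (x z) w :=
  LipschitzWith.finset_sum _ fun l _ => ((lipschitzWith_resid hx w l).neg).const_max 0

lemma continuous_shortfall (N : ℕ) (x : ℕ → ℝ) : Continuous (shortfall N x) :=
  continuous_finsetSum _ fun l _ => continuous_const.max (continuous_resid x l).neg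

lemma ae_resid_ne_zero {N : ℕ} {s : Ω → ℕ → ℝ} (hmeas : Measurable s)
    (hac : P.map (fun ω => fun i : Fin N => s ω i) ≪ (volume : Measure (Fin N → ℝ)))
    (x : ℕ → ℝ) : ∀ᵐ ω ∂P, ∀ l ∈ Icc 1 N, resid x (s ω) l ≠ 0 := by
  rw [Filter.eventually_all_finset]
  intro l hl
  obtain ⟨m, rfl⟩ : ∃ m, l = m + 1 := ⟨l - 1, by simp at hl; omega⟩
  have hmN : m < N := by simp at hl; omega
  let pad : (Fin N → ℝ) → ℕ → ℝ := fun v j => if h : j < N then v ⟨j, h⟩ else 0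
  have hpad : Measurable pad := measurable_pi_lambda _ fun j => by
    by_cases h : j < N <;> simp [pad, h, measurable_pi_apply]
  -- `ξ_{m+1} = 0` pins the coordinate `s_m` to a function of the earlier coordinates.
  let g : (Fin N → ℝ) → ℝ := fun v => x (m + 1) - max 0 (resid x (pad v) m)
  have hg : Measurable g :=
    measurable_const.sub (measurable_const.max ((continuous_resid x m).measurable.comp hpad))
  have hgi : ∀ v a, g (Function.update v ⟨m, hmN⟩ a) = g v := by
    intro v a
    simp only [g]
    congr 2
    refine resid_congr x fun j hj => ?_
    simp only [pad, Function.update_apply, Fin.ext_iff]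
    split_ifs <;> first | rfl | omega
  have hf : Measurable fun ω => fun i : Fin N => s ω i :=
    measurable_pi_lambda _ fun i => (measurable_pi_apply _).comp hmeas
  have hgraph : ∀ᵐ v ∂P.map (fun ω => fun i : Fin N => s ω i), v ⟨m, hmN⟩ ≠ g v :=
    hac.ae_le (measure_eq_zero_iff_ae_notMem.1 (volume_setOf_apply_eq_eq_zero hg _ hgi))
  filter_upwards [ae_of_ae_map hf.aemeasurable hgraph] with ω hω hzero
  have hpast : resid x (pad fun i : Fin N => s ω i) m = resid x (s ω) m :=
    resid_congr x fun j hj => by simp [pad, show j < N by omega]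
  exact hω (by simp only [g, hpast]; simp only [resid] at hzero; linarith)

lemma measurable_resid_comp {s : Ω → ℕ → ℝ} (hs : Measurable s) (x : ℕ → ℝ) :
    Measurable fun ω => resid x (s ω) :=
  (continuous_pi (continuous_resid x)).measurable.comp hs

lemma measurableSet_pos_and_nonpos (k t : ℕ) :
    MeasurableSet {ξ : ℕ → ℝ | (∀ j, k ≤ j → j < t → 0 < ξ j) ∧ ξ t ≤ 0} := by
  measurability

lemma measurable_pathMarginal (N k : ℕ) : Measurable fun ξ : ℕ → ℝ => pathMarginal N ξ k :=
  Finset.measurable_sum _ fun t _ => Measurable.ite (measurableSet_pos_and_nonpos k t)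
    measurable_const measurable_const

lemma integral_pathMarginal [IsFiniteMeasure P] {ξ : Ω → ℕ → ℝ} (hξ : Measurable ξ) (N k : ℕ) :
    Integrable (fun ω => pathMarginal N (ξ ω) k) P ∧
      ∫ ω, pathMarginal N (ξ ω) k ∂P =
        ∑ t ∈ Icc k N, P.real {ω | (∀ j, k ≤ j → j < t → 0 < ξ ω j) ∧ ξ ω t ≤ 0} := by
  have hind : ∀ t,
      (fun ω => if (∀ j, k ≤ j → j < t → 0 < ξ ω j) ∧ ξ ω t ≤ 0 then (1 : ℝ) else 0) =
        {ω | (∀ j, k ≤ j → j < t → 0 < ξ ω j) ∧ ξ ω t ≤ 0}.indicator 1 := fun t => by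
    ext ω
    simp [Set.indicator_apply]
  have hset : ∀ t, MeasurableSet {ω | (∀ j, k ≤ j → j < t → 0 < ξ ω j) ∧ ξ ω t ≤ 0} :=
    fun t => hξ (measurableSet_pos_and_nonpos k t)
  simp only [pathMarginal]
  have hint : ∀ t ∈ Icc k N, Integrable
      (fun ω => if (∀ j, k ≤ j → j < t → 0 < ξ ω j) ∧ ξ ω t ≤ 0 then (1 : ℝ) else 0) P :=
    fun t _ => hind t ▸ (integrable_const 1).indicator (hset t)
  refine ⟨integrable_finsetSum _ hint, ?_⟩
  rw [integral_finsetSum _ hint]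
  exact sum_congr rfl fun t _ => hind t ▸ integral_indicator_one (hset t)

lemma zetaPrice_eq_integral_pathMarginal [IsFiniteMeasure P] {N : ℕ} {s : Ω → ℕ → ℝ}
    (hmeas : Measurable s) (c0 : ℝ) (x : ℕ → ℝ) {k : ℕ} (hk : k ≤ N) :
    zetaPrice N P s c0 x k = c0 * ∫ ω, pathMarginal N (resid x (s ω)) k ∂P := by
  rw [(integral_pathMarginal (measurable_resid_comp hmeas x) N k).2,
    ← insert_Icc_add_one_left_eq_Icc hk, sum_insert (by simp)]
  have hfirst : {ω | (∀ j, k ≤ j → j < k → 0 < resid x (s ω) j) ∧ resid x (s ω) k ≤ 0} =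
      {ω | resid x (s ω) k ≤ 0} := by
    ext ω
    simp only [Set.mem_ofPred_eq, and_iff_right_iff_imp]
    intro _ j h₁ h₂
    omega
  simp only [zetaPrice, hfirst, measureReal_def]

theorem hasFDerivAt_integral_shortfall [IsFiniteMeasure P] {N : ℕ} {s : Ω → ℕ → ℝ}
    (hmeas : Measurable s) {x : E → ℕ → ℝ} {x' : ℕ → E →L[ℝ] ℝ} {L : NNReal} {y : E}
    (hxL : ∀ k, LipschitzWith L fun z => x z k)
    (hx : ∀ k, HasFDerivAt (fun z => x z k) (x' k) y)
    (hint : Integrable (fun ω => shortfall N (x y) (s ω)) P)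
    (hne : ∀ᵐ ω ∂P, ∀ l ∈ Icc 1 N, resid (x y) (s ω) l ≠ 0) :
    HasFDerivAt (fun z => ∫ ω, shortfall N (x z) (s ω) ∂P)
      (∑ k ∈ Icc 1 N, (∫ ω, pathMarginal N (resid (x y) (s ω)) k ∂P) • x' k) y := by
  have hpm := integral_pathMarginal (P := P) (measurable_resid_comp hmeas (x y)) N
  obtain ⟨-, hderiv⟩ := hasFDerivAt_integral_of_dominated_loc_of_lip
    (F := fun z ω => shortfall N (x z) (s ω))
    (F' := fun ω => ∑ k ∈ Icc 1 N, pathMarginal N (resid (x y) (s ω)) k • x' k)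
    (bound := fun _ => ((∑ l ∈ Icc 1 N, l * L : NNReal) : ℝ)) Filter.univ_mem
    (.of_forall fun z =>
      ((continuous_shortfall N (x z)).measurable.comp hmeas).aestronglyMeasurable)
    hint
    (Finset.aestronglyMeasurable_fun_sum _ fun k _ => (hpm k).1.aestronglyMeasurable.smul_const _)
    (ae_of_all _ fun ω => by
      simpa only [Real.nnabs_coe] using (lipschitzWith_shortfall N hxL (s ω)).lipschitzOnWith)
    (integrable_const _)
    (hne.mono fun ω hω => hasFDerivAt_shortfall hx (s ω) hω)
  refine hderiv.congr_fderiv ?_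
  rw [integral_finsetSum _ fun k _ => (hpm k).1.smul_const _]
  simp only [integral_smul_const]

end

noncomputable def demandCoord (N k : ℕ) : (Fin N → ℝ) →L[ℝ] ℝ :=
  if h : 1 ≤ k ∧ k ≤ N then ContinuousLinearMap.proj (R := ℝ) (φ := fun _ : Fin N => ℝ)
    ⟨k - 1, by omega⟩ else 0

lemma demandCoord_apply (N k : ℕ) (y : Fin N → ℝ) : demandCoord N k y = demandOf N y k := by
  unfold demandCoord demandOf
  split_ifs <;> rfl

lemma lipschitzWith_demandOf (N k : ℕ) : LipschitzWith 1 fun y => demandOf N y k := by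
  unfold demandOf
  split_ifs
  · exact LipschitzWith.eval _
  · exact LipschitzWith.const' 0

lemma hasFDerivAt_demandOf (N k : ℕ) (y : Fin N → ℝ) :
    HasFDerivAt (fun y => demandOf N y k) (demandCoord N k) y := by
  have : (fun y => demandOf N y k) = demandCoord N k :=
    funext fun y => (demandCoord_apply N k y).symm
  exact this ▸ (demandCoord N k).hasFDerivAt

lemma sum_Icc_smul_demandCoord (N : ℕ) (f : ℕ → ℝ) :
    ∑ k ∈ Icc 1 N, f k • demandCoord N k =
      ∑ i : Fin N, f (i + 1) • ContinuousLinearMap.proj (R := ℝ) (φ := fun _ : Fin N => ℝ) i := by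
  have hcoord : ∀ i : Fin N, demandCoord N (i + 1) = ContinuousLinearMap.proj i := fun i => by
    simp [demandCoord, i.isLt]
  rw [← Ico_add_one_right_eq_Icc, ← zero_add 1, ← sum_Ico_add', Nat.Ico_zero_eq_range,
    ← Fin.sum_univ_eq_sum_range (fun k => f (k + 1) • demandCoord N (k + 1))]
  simp only [hcoord]

theorem Qstar_hasFDerivAt_marginal_cost_general
    (N : ℕ)
    {Ω : Type*} [MeasurableSpace Ω] (P : Measure Ω) [IsProbabilityMeasure P]
    (s : Ω → ℕ → ℝ) (hmeas : Measurable s)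
    (c0 : ℝ)
    (K : Set (ℕ → ℝ)) (hK : IsCompact K)
    (hsupp : ∀ᵐ ω ∂P, s ω ∈ K)
    (hac : P.map (fun ω => fun i : Fin N => s ω i) ≪ (volume : Measure (Fin N → ℝ))) :
    ∀ y : Fin N → ℝ, (∀ i, 0 < y i) →
      HasFDerivAt (Qstar N P s c0)
        (∑ i : Fin N,
          zetaPrice N P s c0 (demandOf N y) (i.1 + 1) •
            ContinuousLinearMap.proj (R := ℝ) (φ := fun _ : Fin N => ℝ) i)
        y := by
  intro y _
  have hexp := hasFDerivAt_integral_shortfall hmeas (lipschitzWith_demandOf N)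
    (hasFDerivAt_demandOf N · y)
    (integrable_comp_of_ae_mem_compact (continuous_shortfall N _) hmeas hK hsupp)
    (ae_resid_ne_zero hmeas hac _)
  refine (hexp.const_mul c0).congr_fderiv ?_
  rw [smul_sum, ← sum_Icc_smul_demandCoord]
  refine sum_congr rfl fun k hk => ?_
  rw [smul_smul, zetaPrice_eq_integral_pathMarginal hmeas c0 _ (mem_Icc.1 hk).2]

/-- Theorem 2, marginal cost supply curve.  Suppose the law of the
random supply vector `s` is absolutely continuous w.r.t. Lebesgue measure on `ℝ^N` and
has compact support contained in `ℝ₊^N`.  Then `Q*` is differentiable at every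
`x ∈ (0,∞)^N`, with partial derivatives `∂Q*(x)/∂x_k = ζ_k(x)` for `k = 1,…,N`;
i.e. its (Fréchet) derivative at `x` is the linear functional
`h ↦ Σ_{k=1}^N ζ_k(x) h_k`. -/
theorem Qstar_hasFDerivAt_marginal_cost
    (N : ℕ) (hN : 1 ≤ N)
    {Ω : Type*} [MeasurableSpace Ω] (P : Measure Ω) [IsProbabilityMeasure P]
    (s : Ω → ℕ → ℝ) (hmeas : Measurable s)
    (c0 : ℝ) (hc0 : 0 < c0)
    (K : Set (ℕ → ℝ)) (hK : IsCompact K)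
    (hKpos : K ⊆ {w : ℕ → ℝ | ∀ j, j < N → 0 ≤ w j})
    (hsupp : ∀ᵐ ω ∂P, s ω ∈ K)
    (hac : P.map (fun ω => fun i : Fin N => s ω i) ≪ (volume : Measure (Fin N → ℝ))) :
    ∀ y : Fin N → ℝ, (∀ i, 0 < y i) →
      HasFDerivAt (Qstar N P s c0)
        (∑ i : Fin N,
          zetaPrice N P s c0 (demandOf N y) (i.1 + 1) •
            ContinuousLinearMap.proj (R := ℝ) (φ := fun _ : Fin N => ℝ) i)
        y :=
  Qstar_hasFDerivAt_marginal_cost_general N P s hmeas c0 K hK hsupp hac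
end

section
/- Expected-utility upper bound (inequality (sh1)): fix k ∈ {1,…,N}, let q > 0, R > 0, and let U : ℝ₊ → ℝ₊ be a Borel measurable function that is nondecreasing on [0,q], satisfies U(y) ≤ R·y for all y ∈ [0,q], U(y) = U(q) for all y ≥ q, and R = U(q)/q. With the partition events η_k = {ξ_k ≤ 0}, η_t = {ξ_k > 0, …, ξ_{t−1} > 0, ξ_t ≤ 0} for t = k+1, …, N−1, and η_N = {ξ_k > 0, …, ξ_{N−1} > 0}, let a_k, …, a_N ≥ 0 and let W : Ω → ℝ₊ be a bounded random variable such that W ≤ Σ_{τ=k}^t a_τ almost surely on η_t for every t ∈ {k, …, N}. Then R·q − E[U(W)] ≥ R · Σ_{t=k}^N P(η_t) · max{0, q − Σ_{τ=k}^t a_τ}. -/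
open MeasureTheory

/-- The events `η_k = {ξ_k ≤ 0}`, `η_t = {ξ_k > 0, …, ξ_{t-1} > 0, ξ_t ≤ 0}` for
`t = k+1, …, N-1`, and `η_N = {ξ_k > 0, …, ξ_{N-1} > 0}`. -/
def etaEvent (N : ℕ) {Ω : Type*} (x : ℕ → ℝ) (s : Ω → ℕ → ℝ) (k t : ℕ) : Set Ω :=
  if t = N then {ω | ∀ j, k ≤ j → j < N → 0 < resid x (s ω) j}
  else {ω | (∀ j, k ≤ j → j < t → 0 < resid x (s ω) j) ∧ resid x (s ω) t ≤ 0}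

/-!
The events `η_k, …, η_N` partition `Ω`. Since `U` lies below the line `y ↦ R y` on `[0, q]` and
is constant beyond `q`, `U(y) ≤ R q - R max{0, q - y}` for `y ≥ 0`, and the right-hand side is
nondecreasing in `y`; so on `η_t` we get `U(W) ≤ R q - R max{0, q - Σ_{τ=k}^t a_τ}`.
Integrating over the partition and using `Σ_t P(η_t) = 1` gives the bound.
-/

section etaEvent

variable {N : ℕ} {Ω : Type*} {x : ℕ → ℝ} {s : Ω → ℕ → ℝ} {k t : ℕ} {ω : Ω}

theorem measurable_resid [MeasurableSpace Ω] (hs : Measurable s) (j : ℕ) :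
    Measurable fun ω => resid x (s ω) j := by
  induction j with
  | zero => exact measurable_const
  | succ j ih =>
    exact ((measurable_const.max ih).add ((measurable_pi_apply j).comp hs)).sub measurable_const

theorem measurableSet_etaEvent [MeasurableSpace Ω] (hs : Measurable s) :
    MeasurableSet (etaEvent N x s k t) := by
  have hpos : ∀ m, MeasurableSet {ω | ∀ j, k ≤ j → j < m → 0 < resid x (s ω) j} := by
    intro m
    simp only [Set.ofPred_forall]
    exact .iInter fun j => .iInter fun _ => .iInter fun _ =>
      measurableSet_lt measurable_const (measurable_resid hs j)
  unfold etaEvent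
  split_ifs
  · exact hpos N
  · exact (hpos t).inter (measurableSet_le (measurable_resid hs t) measurable_const)

theorem resid_pos_of_mem_etaEvent (h : ω ∈ etaEvent N x s k t) {j : ℕ} (hkj : k ≤ j)
    (hjt : j < t) : 0 < resid x (s ω) j := by
  unfold etaEvent at h
  split_ifs at h with ht
  · exact h j hkj (ht ▸ hjt)
  · exact h.1 j hkj hjt

theorem resid_nonpos_of_mem_etaEvent (h : ω ∈ etaEvent N x s k t) (htN : t ≠ N) :
    resid x (s ω) t ≤ 0 := by
  rw [etaEvent, if_neg htN] at h
  exact h.2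

theorem disjoint_etaEvent_of_lt {t₁ t₂ : ℕ} (hkt : k ≤ t₁) (ht : t₁ < t₂) (htN : t₂ ≤ N) :
    Disjoint (etaEvent N x s k t₁) (etaEvent N x s k t₂) :=
  Set.disjoint_left.2 fun _ h₁ h₂ => (resid_pos_of_mem_etaEvent h₂ hkt ht).not_ge
    (resid_nonpos_of_mem_etaEvent h₁ (ht.trans_le htN).ne)

theorem pairwiseDisjoint_etaEvent :
    (Finset.Icc k N : Set ℕ).PairwiseDisjoint (etaEvent N x s k) := by
  intro t₁ ht₁ t₂ ht₂ hne
  simp only [Finset.coe_Icc, Set.mem_Icc] at ht₁ ht₂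
  rcases hne.lt_or_gt with h | h
  · exact disjoint_etaEvent_of_lt ht₁.1 h ht₂.2
  · exact (disjoint_etaEvent_of_lt ht₂.1 h ht₁.2).symm

/-- `ω` lies in `η_t` for the first `t ∈ [k, N)` with `ξ_t ≤ 0`, and in `η_N` if there is none. -/
theorem biUnion_etaEvent (hkN : k ≤ N) : ⋃ t ∈ Finset.Icc k N, etaEvent N x s k t = Set.univ := by
  classical
  refine Set.eq_univ_of_forall fun ω => Set.mem_iUnion₂.2 ?_
  by_cases h : ∃ j, k ≤ j ∧ j < N ∧ resid x (s ω) j ≤ 0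
  · obtain ⟨hkt, htN, hres⟩ := Nat.find_spec h
    refine ⟨Nat.find h, Finset.mem_Icc.2 ⟨hkt, htN.le⟩, ?_⟩
    rw [etaEvent, if_neg htN.ne]
    refine ⟨fun j hkj hjt => ?_, hres⟩
    have := Nat.find_min h hjt
    push Not at this
    exact this hkj (hjt.trans htN)
  · push Not at h
    refine ⟨N, Finset.mem_Icc.2 ⟨hkN, le_rfl⟩, ?_⟩
    rw [etaEvent, if_pos rfl]
    exact h

end etaEvent

theorem integral_le_sum_of_ae_le_on_partition {Ω ι : Type*} [MeasurableSpace Ω] {μ : Measure Ω}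
    [IsFiniteMeasure μ] {T : Finset ι} {E : ι → Set Ω} (hE : ∀ t ∈ T, MeasurableSet (E t))
    (hdisj : (T : Set ι).PairwiseDisjoint E) (hcover : ⋃ t ∈ T, E t = Set.univ)
    {f : Ω → ℝ} (hf : Integrable f μ) {c : ι → ℝ} (hfc : ∀ t ∈ T, ∀ᵐ ω ∂μ, ω ∈ E t → f ω ≤ c t) :
    ∫ ω, f ω ∂μ ≤ ∑ t ∈ T, μ.real (E t) * c t := by
  rw [← setIntegral_univ, ← hcover, integral_biUnion_finset T hE hdisj fun t _ => hf.integrableOn]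
  gcongr with t ht
  calc ∫ ω in E t, f ω ∂μ ≤ ∫ _ in E t, c t ∂μ :=
        setIntegral_mono_on_ae hf.integrableOn integrableOn_const (hE t ht) (hfc t ht)
    _ = μ.real (E t) * c t := setIntegral_const (c t)

theorem le_mul_sub_mul_max_sub {U : ℝ → ℝ} {q R : ℝ} (hq : 0 ≤ q)
    (hUlin : ∀ y ∈ Set.Icc 0 q, U y ≤ R * y) (hUsat : ∀ y, q ≤ y → U y = U q)
    {y : ℝ} (hy : 0 ≤ y) : U y ≤ R * q - R * max 0 (q - y) := by
  rcases le_or_gt y q with hyq | hqy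
  · rw [max_eq_right (sub_nonneg.2 hyq)]
    linarith [hUlin y ⟨hy, hyq⟩]
  · rw [max_eq_left (sub_nonpos.2 hqy.le), hUsat y hqy.le]
    linarith [hUlin q ⟨hq, le_rfl⟩]

theorem expected_utility_upper_bound_general
    (N : ℕ)
    {Ω : Type*} [MeasurableSpace Ω] (P : Measure Ω) [IsProbabilityMeasure P]
    (s : Ω → ℕ → ℝ) (hmeas : Measurable s)
    (x : ℕ → ℝ)
    (k : ℕ) (hkN : k ≤ N)
    (q R : ℝ) (hq : 0 < q) (hRpos : 0 < R)
    (U : ℝ → ℝ) (hUmeas : Measurable U)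
    (hUnonneg : ∀ y, 0 ≤ y → 0 ≤ U y)
    (hUlin : ∀ y ∈ Set.Icc (0 : ℝ) q, U y ≤ R * y)
    (hUsat : ∀ y, q ≤ y → U y = U q)
    (a : ℕ → ℝ)
    (W : Ω → ℝ) (hWmeas : Measurable W)
    (hWnonneg : ∀ ω, 0 ≤ W ω)
    (hWle : ∀ t ∈ Finset.Icc k N, ∀ᵐ ω ∂P,
      ω ∈ etaEvent N x s k t → W ω ≤ ∑ τ ∈ Finset.Icc k t, a τ) :
    R * q - ∫ ω, U (W ω) ∂P ≥
      R * ∑ t ∈ Finset.Icc k N,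
        (P (etaEvent N x s k t)).toReal * max 0 (q - ∑ τ ∈ Finset.Icc k t, a τ) := by
  have hU : ∀ ω, U (W ω) ≤ R * q - R * max 0 (q - W ω) := fun ω =>
    le_mul_sub_mul_max_sub hq.le hUlin hUsat (hWnonneg ω)
  have hint : Integrable (fun ω => U (W ω)) P := by
    refine .of_bound (hUmeas.comp hWmeas).aestronglyMeasurable (R * q) (.of_forall fun ω => ?_)
    rw [Real.norm_of_nonneg (hUnonneg _ (hWnonneg ω))]
    nlinarith [hU ω, le_max_left 0 (q - W ω)]
  have hsum : ∑ t ∈ Finset.Icc k N, P.real (etaEvent N x s k t) = 1 := by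
    rw [← measureReal_biUnion_finset pairwiseDisjoint_etaEvent
      fun _ _ => measurableSet_etaEvent hmeas, biUnion_etaEvent hkN, probReal_univ]
  have hbound := integral_le_sum_of_ae_le_on_partition (fun _ _ => measurableSet_etaEvent hmeas)
    pairwiseDisjoint_etaEvent (biUnion_etaEvent hkN) hint
    (c := fun t => R * q - R * max 0 (q - ∑ τ ∈ Finset.Icc k t, a τ))
    fun t ht => (hWle t ht).mono fun ω hW hω => (hU ω).trans (by gcongr; exact hW hω)
  simp only [mul_sub, Finset.sum_sub_distrib, ← Finset.sum_mul, hsum, one_mul] at hbound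
  simp only [Finset.mul_sum, ← measureReal_def, mul_left_comm R]
  linarith

/-- Expected-utility upper bound (inequality (sh1)): with a utility
function `U` that is nondecreasing on `[0,q]`, bounded by `R·y` there, saturated at `q`
with `R = U(q)/q`, and a bounded nonnegative random delivery `W` satisfying
`W ≤ Σ_{τ=k}^t a_τ` a.s. on `η_t` for every `t ∈ {k,…,N}`, one has
`R·q − E[U(W)] ≥ R · Σ_{t=k}^N P(η_t) · max{0, q − Σ_{τ=k}^t a_τ}`. -/
theorem expected_utility_upper_bound
    (N : ℕ) (hN : 1 ≤ N)
    {Ω : Type*} [MeasurableSpace Ω] (P : Measure Ω) [IsProbabilityMeasure P]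
    (s : Ω → ℕ → ℝ) (hmeas : Measurable s)
    (hs : ∀ ω, ∀ j, j < N → 0 ≤ s ω j)
    (x : ℕ → ℝ) (hx : ∀ j, 1 ≤ j → j ≤ N → 0 ≤ x j)
    (k : ℕ) (hk : 1 ≤ k) (hkN : k ≤ N)
    (q R : ℝ) (hq : 0 < q) (hRpos : 0 < R)
    (U : ℝ → ℝ) (hUmeas : Measurable U)
    (hUnonneg : ∀ y, 0 ≤ y → 0 ≤ U y)
    (hUmono : MonotoneOn U (Set.Icc 0 q))
    (hUlin : ∀ y ∈ Set.Icc (0 : ℝ) q, U y ≤ R * y)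
    (hUsat : ∀ y, q ≤ y → U y = U q)
    (hRq : R = U q / q)
    (a : ℕ → ℝ) (ha : ∀ t ∈ Finset.Icc k N, 0 ≤ a t)
    (W : Ω → ℝ) (hWmeas : Measurable W)
    (hWnonneg : ∀ ω, 0 ≤ W ω) (C : ℝ) (hWbdd : ∀ ω, W ω ≤ C)
    (hWle : ∀ t ∈ Finset.Icc k N, ∀ᵐ ω ∂P,
      ω ∈ etaEvent N x s k t → W ω ≤ ∑ τ ∈ Finset.Icc k t, a τ) :
    R * q - ∫ ω, U (W ω) ∂P ≥
      R * ∑ t ∈ Finset.Icc k N,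
        (P (etaEvent N x s k t)).toReal * max 0 (q - ∑ τ ∈ Finset.Icc k t, a τ) :=
  expected_utility_upper_bound_general N P s hmeas x k hkN q R hq hRpos U hUmeas hUnonneg hUlin
    hUsat a W hWmeas hWnonneg hWle
end
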